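/- arXiv:2205.00016 — 2 statements merged into one kernel-verified Lean document; each statement's English description precedes it below -/
import Mathlib

section
/- Let α_1, …, α_d ≥ 0 with Σ_i α_i² = 1, and let ψ = Σ_i α_i e_i ⊗ e_i ∈ ℂ^d ⊗ ℂ^d (a state in Schmidt form). Set E := (Σ_i α_i)² − 1 and assume E > 0. Define ρ⁻ := (1/E) Σ_{i ≠ j} α_i α_j |e_i ⊗ e_j⟩⟨e_i ⊗ e_j| and ρ⁺ := (|ψ⟩⟨ψ| + E·ρ⁻)/(1 + E). Then ρ⁻ and ρ⁺ are separable density matrices and |ψ⟩⟨ψ| = (1 + E)·ρ⁺ − E·ρ⁻. -/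
open Matrix Complex Kronecker
open scoped ComplexOrder

noncomputable section

/-- A density matrix: positive semidefinite with trace 1. -/
def IsDensityMatrix {d : Type*} [Fintype d] (ρ : Matrix d d ℂ) : Prop :=
  ρ.PosSemidef ∧ ρ.trace = 1

/-- A separable state on a bipartite system: a finite convex combination of Kronecker
products of density matrices. -/
def SeparableState {dA dB : Type*} [Fintype dA] [Fintype dB]
    (ρ : Matrix (dA × dB) (dA × dB) ℂ) : Prop :=
  ∃ (n : ℕ) (p : Fin n → ℝ) (σ : Fin n → Matrix dA dA ℂ) (τ : Fin n → Matrix dB dB ℂ),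
    (∀ k, 0 ≤ p k) ∧ (∑ k, p k) = 1 ∧
    (∀ k, IsDensityMatrix (σ k)) ∧ (∀ k, IsDensityMatrix (τ k)) ∧
    ρ = ∑ k, (p k : ℂ) • ((σ k) ⊗ₖ (τ k))

/-- The robustness of entanglement. -/
def robustness {dA dB : Type*} [Fintype dA] [Fintype dB]
    (ρ : Matrix (dA × dB) (dA × dB) ℂ) : ℝ :=
  sInf { t : ℝ | 0 ≤ t ∧ ∃ σ : Matrix (dA × dB) (dA × dB) ℂ,
    SeparableState σ ∧ SeparableState (((1 + t : ℝ) : ℂ)⁻¹ • (ρ + (t : ℂ) • σ)) }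

/-- γ(ρ): optimal one-norm of a quasiprobability decomposition into separable states. -/
def gammaSep {dA dB : Type*} [Fintype dA] [Fintype dB]
    (ρ : Matrix (dA × dB) (dA × dB) ℂ) : ℝ :=
  sInf { c : ℝ | ∃ (ap am : ℝ) (ρp ρm : Matrix (dA × dB) (dA × dB) ℂ),
    0 ≤ ap ∧ 0 ≤ am ∧ SeparableState ρp ∧ SeparableState ρm ∧
    ρ = (ap : ℂ) • ρp - (am : ℂ) • ρm ∧ c = ap + am }

/-- Singular values of a complex matrix: square roots of eigenvalues of `Mᴴ * M`. -/
def singularValues {m n : Type*} [Fintype m] [Fintype n] [DecidableEq n]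
    (M : Matrix m n ℂ) : n → ℝ :=
  fun i => Real.sqrt ((Matrix.isHermitian_conjTranspose_mul_self M).eigenvalues i)

/-!
`ρ⁻` is diagonal in the product basis with nonnegative weights, hence separable.
For `ρ⁺`, average the product states `|uₜ⟩⟨uₜ| ⊗ |ūₜ⟩⟨ūₜ|` with `uₜ = ∑ₘ √αₘ ω^tₘ eₘ` over all
phase vectors `t ∈ (ℤ/3)ᵈ`, `ω` a primitive cube root of unity. The entry at `((i,j),(k,l))`
carries the phase `ω^(tᵢ - tⱼ - tₖ + tₗ)`, whose average vanishes unless `{i, l} = {j, k}` as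
multisets (this is where `2 ≠ 0` in `ℤ/3` is used), i.e. unless `i = j ∧ k = l` or
`(i,j) = (k,l)`. The surviving entries are exactly those of `|ψ⟩⟨ψ| + E ρ⁻`, and the
normalisation is `(∑ αᵢ)² = 1 + E`.
-/

lemma AddChar.map_sum_eq_prod {A M ι : Type*} [AddCommMonoid A] [CommMonoid M]
    (ψ : AddChar A M) (s : Finset ι) (f : ι → A) :
    ψ (∑ i ∈ s, f i) = ∏ i ∈ s, ψ (f i) := by
  classical
  induction s using Finset.induction_on with
  | empty => simp
  | insert a s ha ih => rw [Finset.sum_insert ha, Finset.prod_insert ha, map_add_eq_mul, ih]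

section Characters

variable {R R' n : Type*} [CommRing R] [Fintype R] [DecidableEq R] [Fintype n] [DecidableEq n]

lemma AddChar.sum_apply_dotProduct [CommRing R'] [IsDomain R'] {ψ : AddChar R R'}
    (hψ : ψ.IsPrimitive) (c : n → R) :
    ∑ t : n → R, ψ (t ⬝ᵥ c) = if c = 0 then (Fintype.card R : R') ^ Fintype.card n else 0 := by
  simp_rw [dotProduct, AddChar.map_sum_eq_prod]
  rw [← Fintype.prod_sum fun m s => ψ (s * c m)]
  simp_rw [AddChar.sum_mulShift _ hψ, apply_ite (Nat.cast : ℕ → R'), Nat.cast_zero,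
    Finset.prod_ite_zero, funext_iff]
  simp

lemma AddChar.sum_apply_sub_sub_add {ψ : AddChar R ℂ} (hψ : ψ.IsPrimitive) (h2 : (2 : R) ≠ 0)
    (i j k l : n) :
    ∑ t : n → R, ψ (t i - t j - t k + t l) =
      if (i = j ∧ k = l) ∨ (i = k ∧ j = l) then (Fintype.card R : ℂ) ^ Fintype.card n else 0 := by
  have h1 : (1 : R) ≠ 0 := fun h => h2 (by rw [← one_add_one_eq_two, h, add_zero])
  have hdot : ∀ t : n → R, t i - t j - t k + t l =
      t ⬝ᵥ (Pi.single i 1 - Pi.single j 1 - Pi.single k 1 + Pi.single l 1) := by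
    intro t
    simp only [dotProduct_add, dotProduct_sub, dotProduct_single, mul_one]
  simp_rw [hdot, AddChar.sum_apply_dotProduct hψ, sub_sub, sub_add_eq_add_sub, sub_eq_zero,
    Pi.single_add_single_eq_single_add_single h1 h1, one_add_one_eq_two]
  simp only [h2, true_and, false_and, or_false, eq_comm (a := l)]

end Characters

lemma sum_ite_smul_single_eq_diagonal {m α : Type*} [Fintype m] [DecidableEq m] [Semiring α]
    (P : m → Prop) [DecidablePred P] (c : m → α) :
    ∑ p, (if P p then c p • single p p (1 : α) else 0) =
      diagonal fun p => if P p then c p else 0 := by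
  rw [← sum_single_eq_diagonal]
  congr with p : 1
  split_ifs <;> simp

lemma sum_offDiag_mul {m R : Type*} [Fintype m] [DecidableEq m] [CommRing R] (f : m → R) :
    ∑ p : m × m, (if p.1 ≠ p.2 then f p.1 * f p.2 else 0) = (∑ i, f i) ^ 2 - ∑ i, f i ^ 2 := by
  have hsplit : ∀ p : m × m, (if p.1 ≠ p.2 then f p.1 * f p.2 else 0) =
      f p.1 * f p.2 - if p.1 = p.2 then f p.1 * f p.2 else 0 := fun p => by
    split_ifs <;> simp_all
  simp_rw [hsplit, Finset.sum_sub_distrib, Fintype.sum_prod_type, Finset.sum_ite_eq,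
    Finset.mem_univ, if_true, ← Finset.mul_sum, ← Finset.sum_mul, sq]

lemma isDensityMatrix_inv_smul_vecMulVec {n : Type*} [Fintype n] (v : n → ℂ) {r : ℝ}
    (hr : ∑ i, ‖v i‖ ^ 2 = r) (hr0 : r ≠ 0) :
    IsDensityMatrix ((r : ℂ)⁻¹ • vecMulVec v (star v)) := by
  have hr_pos : 0 < r := (hr ▸ Finset.sum_nonneg fun i _ => sq_nonneg ‖v i‖).lt_of_ne' hr0
  have htrace : (vecMulVec v (star v)).trace = r := by
    simp_rw [trace_vecMulVec, dotProduct, Pi.star_apply, RCLike.star_def, Complex.mul_conj,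
      Complex.normSq_eq_norm_sq, ← hr, Complex.ofReal_sum]
  refine ⟨(posSemidef_vecMulVec_self_star v).smul ?_, ?_⟩
  · rw [← Complex.ofReal_inv, Complex.zero_le_real]
    exact inv_nonneg.mpr hr_pos.le
  · rw [trace_smul, htrace, smul_eq_mul, inv_mul_cancel₀ (Complex.ofReal_ne_zero.mpr hr0)]

lemma isDensityMatrix_single {n : Type*} [Fintype n] [DecidableEq n] (i : n) :
    IsDensityMatrix (single i i (1 : ℂ)) := by
  have hnorm : ∑ j, ‖(Pi.single i 1 : n → ℂ) j‖ ^ 2 = 1 := by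
    simp [Pi.single_apply, apply_ite]
  have h := isDensityMatrix_inv_smul_vecMulVec _ hnorm one_ne_zero
  rwa [Complex.ofReal_one, inv_one, one_smul, Pi.star_single, star_one,
    ← single_eq_single_vecMulVec_single] at h

lemma separableState_sum {dA dB ι : Type*} [Fintype dA] [Fintype dB] [Fintype ι]
    {p : ι → ℝ} {σ : ι → Matrix dA dA ℂ} {τ : ι → Matrix dB dB ℂ}
    (hp : ∀ k, 0 ≤ p k) (hsum : ∑ k, p k = 1)
    (hσ : ∀ k, IsDensityMatrix (σ k)) (hτ : ∀ k, IsDensityMatrix (τ k)) :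
    SeparableState (∑ k, (p k : ℂ) • (σ k ⊗ₖ τ k)) := by
  let e := (Fintype.equivFin ι).symm
  refine ⟨Fintype.card ι, p ∘ e, σ ∘ e, τ ∘ e, fun k => hp _, ?_, fun k => hσ _, fun k => hτ _,
    (e.sum_comp _).symm⟩
  rw [← hsum]
  exact e.sum_comp p

lemma separableState_diagonal {dA dB : Type*} [Fintype dA] [Fintype dB] [DecidableEq dA]
    [DecidableEq dB] {w : dA × dB → ℝ} (hw : ∀ p, 0 ≤ w p) (hsum : ∑ p, w p = 1) :
    SeparableState (diagonal fun p => (w p : ℂ)) := by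
  convert separableState_sum hw hsum (fun p => isDensityMatrix_single p.1)
    (fun p => isDensityMatrix_single p.2)
  simp_rw [single_kronecker_single, mul_one, Prod.mk.eta, smul_single, smul_eq_mul, mul_one,
    sum_single_eq_diagonal]

section Twirl

variable {R n : Type*} [CommRing R] [Fintype R]

def phaseVec (ψ : AddChar R ℂ) (β : n → ℝ) (t : n → R) : n → ℂ :=
  fun m => β m * ψ (t m)

def schmidtVec [DecidableEq n] (α : n → ℝ) : n × n → ℂ :=
  fun p => if p.1 = p.2 then (α p.1 : ℂ) else 0

lemma norm_phaseVec_sq (ψ : AddChar R ℂ) (β : n → ℝ) (t : n → R) (m : n) :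
    ‖phaseVec ψ β t m‖ ^ 2 = β m ^ 2 := by
  rw [phaseVec, norm_mul, AddChar.norm_apply, mul_one, Complex.norm_real, Real.norm_eq_abs, sq_abs]

lemma vecMulVec_phaseVec_kronecker_apply (ψ : AddChar R ℂ) (β : n → ℝ) (t : n → R)
    (i j k l : n) :
    (vecMulVec (phaseVec ψ β t) (star (phaseVec ψ β t)) ⊗ₖ
        vecMulVec (phaseVec ψ β (-t)) (star (phaseVec ψ β (-t)))) (i, j) (k, l) =
      ((β i * β j * β k * β l : ℝ) : ℂ) * ψ (t i - t k - t j + t l) := by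
  simp only [kroneckerMap_apply, vecMulVec_apply, phaseVec, Pi.star_apply, Pi.neg_apply,
    star_mul', Complex.star_def, Complex.conj_ofReal, ← AddChar.map_neg_eq_conj, neg_neg,
    sub_eq_add_neg, AddChar.map_add_eq_mul]
  push_cast
  ring

theorem sum_vecMulVec_phaseVec_kronecker [DecidableEq R] [Fintype n] [DecidableEq n]
    {ψ : AddChar R ℂ} (hψ : ψ.IsPrimitive) (h2 : (2 : R) ≠ 0) (β : n → ℝ) :
    ∑ t : n → R, vecMulVec (phaseVec ψ β t) (star (phaseVec ψ β t)) ⊗ₖ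
        vecMulVec (phaseVec ψ β (-t)) (star (phaseVec ψ β (-t))) =
      ((Fintype.card R : ℂ) ^ Fintype.card n) •
        (vecMulVec (schmidtVec (β ^ 2)) (star (schmidtVec (β ^ 2))) +
          diagonal fun p => if p.1 ≠ p.2 then (((β ^ 2) p.1 * (β ^ 2) p.2 : ℝ) : ℂ) else 0) := by
  ext ⟨i, j⟩ ⟨k, l⟩
  simp_rw [Matrix.sum_apply, vecMulVec_phaseVec_kronecker_apply, ← Finset.mul_sum,
    AddChar.sum_apply_sub_sub_add hψ h2]
  simp only [Matrix.smul_apply, Matrix.add_apply, vecMulVec_apply, diagonal_apply, schmidtVec,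
    Pi.star_apply, Prod.mk.injEq, smul_eq_mul, Pi.pow_apply]
  by_cases hij : i = j <;> by_cases hkl : k = l <;> by_cases hik : i = k <;>
    by_cases hjl : j = l <;> subst_vars <;> simp [*] <;> ring

end Twirl

theorem separableState_inv_sq_smul_schmidt_add_diagonal {n : Type*} [Fintype n] [DecidableEq n]
    (β : n → ℝ) {s : ℝ} (hs : ∑ m, β m ^ 2 = s) (hs0 : s ≠ 0) :
    SeparableState (((s ^ 2 : ℝ) : ℂ)⁻¹ •
      (vecMulVec (schmidtVec (β ^ 2)) (star (schmidtVec (β ^ 2))) +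
        diagonal fun p => if p.1 ≠ p.2 then (((β ^ 2) p.1 * (β ^ 2) p.2 : ℝ) : ℂ) else 0)) := by
  let ψ : AddChar (ZMod 3) ℂ := ZMod.stdAddChar
  have hnorm : ∀ t, ∑ m, ‖phaseVec ψ β t m‖ ^ 2 = s := fun t => by
    simp_rw [norm_phaseVec_sq, hs]
  convert separableState_sum (p := fun _ : n → ZMod 3 => (3 ^ Fintype.card n : ℝ)⁻¹)
    (fun _ => by positivity) (by simp [ZMod.card])
    (fun t => isDensityMatrix_inv_smul_vecMulVec _ (hnorm t) hs0)
    (fun t => isDensityMatrix_inv_smul_vecMulVec _ (hnorm (-t)) hs0) using 1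
  simp_rw [smul_kronecker, kronecker_smul, smul_smul, ← Finset.smul_sum]
  rw [sum_vecMulVec_phaseVec_kronecker (ψ := ψ) (ZMod.isPrimitive_stdAddChar 3) (by decide),
    smul_smul, ZMod.card]
  congr 1
  push_cast
  field_simp

theorem optimal_decomposition_pure_state {d : ℕ} (α : Fin d → ℝ)
    (hα : ∀ i, 0 ≤ α i) (hnorm : ∑ i, (α i) ^ 2 = 1)
    (E : ℝ) (hE : E = (∑ i, α i) ^ 2 - 1) (hEpos : 0 < E) :
    let ψ : Fin d × Fin d → ℂ := fun p => if p.1 = p.2 then ((α p.1 : ℝ) : ℂ) else 0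
    let ρm : Matrix (Fin d × Fin d) (Fin d × Fin d) ℂ :=
      ((E : ℂ))⁻¹ • ∑ p : Fin d × Fin d,
        if p.1 ≠ p.2 then ((α p.1 * α p.2 : ℝ) : ℂ) • Matrix.single p p 1 else 0
    let ρp : Matrix (Fin d × Fin d) (Fin d × Fin d) ℂ :=
      (((1 + E : ℝ)) : ℂ)⁻¹ • (vecMulVec ψ (star ψ) + (E : ℂ) • ρm)
    SeparableState ρm ∧ SeparableState ρp ∧
      vecMulVec ψ (star ψ) = ((1 + E : ℝ) : ℂ) • ρp - (E : ℂ) • ρm := by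
  intro ψ ρm ρp
  have hE0 : (E : ℂ) ≠ 0 := by exact_mod_cast hEpos.ne'
  have hoffDiag : (E : ℂ) • ρm =
      diagonal fun p => if p.1 ≠ p.2 then ((α p.1 * α p.2 : ℝ) : ℂ) else 0 := by
    rw [smul_inv_smul₀ hE0, sum_ite_smul_single_eq_diagonal]
  refine ⟨?_, ?_, ?_⟩
  · have hρm : ρm = diagonal fun p => (((if p.1 ≠ p.2 then α p.1 * α p.2 else 0) / E : ℝ) : ℂ) := by
      rw [← inv_smul_smul₀ hE0 ρm, hoffDiag, ← diagonal_smul]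
      congr 1
      funext p
      by_cases h : p.1 = p.2 <;> simp [h, div_eq_inv_mul]
    rw [hρm]
    refine separableState_diagonal (fun p => ?_) ?_
    · exact div_nonneg (by split_ifs; exacts [mul_nonneg (hα _) (hα _), le_rfl]) hEpos.le
    · rw [← Finset.sum_div, sum_offDiag_mul, hnorm, ← hE, div_self hEpos.ne']
  · have hsqrt : (fun i => √(α i)) ^ 2 = α := funext fun i => Real.sq_sqrt (hα i)
    have hS : 1 + E = (∑ i, α i) ^ 2 := by rw [hE]; ring
    have h := separableState_inv_sq_smul_schmidt_add_diagonal (fun i => √(α i)) (s := ∑ i, α i)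
      (by simp_rw [Real.sq_sqrt (hα _)]) (by nlinarith)
    rwa [hsqrt, ← hS, ← hoffDiag] at h
  · rw [smul_inv_smul₀ (by exact_mod_cast (by linarith : (1 + E) ≠ 0)), add_sub_cancel_right]
end
end

section
/- Let CNOT be the 4×4 unitary !![1,0,0,0; 0,1,0,0; 0,0,0,1; 0,0,1,0]. Then the robustness of entanglement of the Choi state of CNOT satisfies 1 + 2·E(|Φ_CNOT⟩⟨Φ_CNOT|) = 3, i.e., E(|Φ_CNOT⟩⟨Φ_CNOT|) = 1. -/
/-!
Write `ψ = (|00⟩ + |11⟩)/√2` for the Bell state. With the isometries `V_A : |i⟩ ↦ |ii⟩` and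
`V_B : |i⟩ ↦ (|0,i⟩ + |1,1+i⟩)/√2` (onto `Φ⁺` and `Ψ⁺`), the Choi vector is `Φ = (V_A ⊗ V_B) ψ`.

Lower bound: for density matrices `σ, τ` the compressions `S = V_Aᴴ σ V_A`, `T = V_Bᴴ τ V_B` are
positive with trace at most `1`, and `⟨Φ|σ ⊗ τ|Φ⟩ = ⟨ψ|S ⊗ T|ψ⟩ = ½ ∑ S_ij T_ij ≤ ½ tr S tr T ≤ ½`
by Cauchy–Schwarz on the `2 × 2` minors and AM–GM. By convexity every separable state has overlap
at most `½` with `Φ`, while `(ρ + tσ)/(1 + t)` has overlap at least `1/(1 + t)`; so `t ≥ 1`.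

Upper bound: for `σ = ½(|01⟩⟨01| + |10⟩⟨10|)`, the state `½(ψψ* + σ)` is the phase twirl
`¼ ∑_ω φ_ω φ_ω* ⊗ φ_ω̄ φ_ω̄*` over `ω ∈ {1, i, -1, -i}`, `φ_ω = (|0⟩ + ω|1⟩)/√2`. Both are separable,
and separability survives conjugation by `V_A ⊗ V_B`.
-/

open Matrix Complex Kronecker
open scoped ComplexOrder

noncomputable section

/-- The Choi state (as a vector) of a two-qubit unitary `U` indexed by pairs:
component at `((a,a'),(b,b'))` is `(1/2) * U (a,b) (a',b')`, grouping systems as `AA'` vs `BB'`. -/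
def choiVec (U : Matrix (Fin 2 × Fin 2) (Fin 2 × Fin 2) ℂ) :
    (Fin 2 × Fin 2) × (Fin 2 × Fin 2) → ℂ :=
  fun q => (1 / 2 : ℂ) * U (q.1.1, q.2.1) (q.1.2, q.2.2)

/-- Regard an index in `Fin 2 × Fin 2` as an index in `Fin 4` via `(a,b) ↦ 2a+b`. -/
def pairIdx (p : Fin 2 × Fin 2) : Fin 4 :=
  ⟨2 * p.1.val + p.2.val, by have := p.1.isLt; have := p.2.isLt; omega⟩

/-- Regard a 4×4 matrix as a matrix indexed by pairs `(a,b) ∈ {0,1}²`. -/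
def toPair (U : Matrix (Fin 4) (Fin 4) ℂ) : Matrix (Fin 2 × Fin 2) (Fin 2 × Fin 2) ℂ :=
  Matrix.of fun i j => U (pairIdx i) (pairIdx j)

namespace Matrix

lemma kronecker_mul_kronecker_mul_kronecker {α : Type*} [CommSemiring α]
    {k l m n p q r s : Type*} [Fintype l] [Fintype m] [Fintype n] [Fintype p]
    (P : Matrix k l α) (P' : Matrix q m α) (A : Matrix l n α) (B : Matrix m p α)
    (Q : Matrix n r α) (Q' : Matrix p s α) :
    (P ⊗ₖ P') * (A ⊗ₖ B) * (Q ⊗ₖ Q') = (P * A * Q) ⊗ₖ (P' * B * Q') := by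
  rw [← mul_kronecker_mul, ← mul_kronecker_mul]

lemma star_mulVec_dotProduct_mulVec {m n : Type*} [Fintype m] [Fintype n]
    (M : Matrix n m ℂ) (A : Matrix n n ℂ) (v : m → ℂ) :
    star (M *ᵥ v) ⬝ᵥ A *ᵥ (M *ᵥ v) = star v ⬝ᵥ (Mᴴ * A * M) *ᵥ v := by
  simp only [star_mulVec, dotProduct_mulVec, vecMul_vecMul, ← mulVec_mulVec]

lemma vecMulVec_mulVec_star {m n : Type*} [Fintype m] (M : Matrix n m ℂ) (v : m → ℂ) :
    vecMulVec (M *ᵥ v) (star (M *ᵥ v)) = M * vecMulVec v (star v) * Mᴴ := by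
  rw [mul_vecMulVec, vecMulVec_mul, star_mulVec]

lemma trace_conjTranspose_mul_mul_le {m n : Type*} [Fintype m] [Fintype n] [DecidableEq m]
    [DecidableEq n] {V : Matrix n m ℂ} (hV : Vᴴ * V = 1) {A : Matrix n n ℂ} (hA : A.PosSemidef) :
    (Vᴴ * A * V).trace ≤ A.trace := by
  set Q := 1 - V * Vᴴ
  have hQ : Qᴴ = Q := by simp [Q]
  have hP : V * Vᴴ * (V * Vᴴ) = V * Vᴴ := by
    rw [Matrix.mul_assoc, ← Matrix.mul_assoc Vᴴ, hV, Matrix.one_mul]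
  have hQQ : Q * Q = Q := by
    simp only [Q, sub_mul, mul_sub, Matrix.one_mul, Matrix.mul_one, hP]; abel
  have hV' : (Vᴴ * A * V).trace = (A * (V * Vᴴ)).trace := by
    rw [Matrix.mul_assoc, trace_mul_comm, Matrix.mul_assoc]
  have hQ' : (Qᴴ * A * Q).trace = (A * Q).trace := by
    rw [hQ, Matrix.mul_assoc, trace_mul_comm, Matrix.mul_assoc, hQQ]
  have hsplit : A.trace = (Vᴴ * A * V).trace + (Qᴴ * A * Q).trace := by
    rw [hV', hQ', ← trace_add, ← mul_add]; simp [Q]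
  rw [hsplit]
  exact le_add_of_nonneg_right (hA.conjTranspose_mul_mul_same Q).trace_nonneg

lemma PosSemidef.normSq_apply_le {n : Type*} {A : Matrix n n ℂ} (hA : A.PosSemidef) (i j : n) :
    Complex.normSq (A i j) ≤ (A i i).re * (A j j).re := by
  have hdet := (hA.submatrix ![i, j]).det_nonneg
  rw [det_fin_two] at hdet
  simp only [submatrix_apply, cons_val_zero, cons_val_one] at hdet
  have hji : A j i = starRingEnd ℂ (A i j) := (hA.1.apply j i).symm
  have hii := (Complex.nonneg_iff.mp (hA.diag_nonneg (i := i))).2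
  have hjj := (Complex.nonneg_iff.mp (hA.diag_nonneg (i := j))).2
  rw [hji, Complex.mul_conj, Complex.nonneg_iff] at hdet
  simpa [Complex.mul_re, ← hii, ← hjj] using hdet.1

lemma PosSemidef.re_sum_mul_le_fin_two {S T : Matrix (Fin 2) (Fin 2) ℂ}
    (hS : S.PosSemidef) (hT : T.PosSemidef) :
    (∑ i, ∑ j, S i j * T i j).re ≤ S.trace.re * T.trace.re := by
  have hS10 : S 1 0 = starRingEnd ℂ (S 0 1) := (hS.1.apply 1 0).symm
  have hT10 : T 1 0 = starRingEnd ℂ (T 0 1) := (hT.1.apply 1 0).symm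
  have hS0 := Complex.nonneg_iff.mp (hS.diag_nonneg (i := 0))
  have hS1 := Complex.nonneg_iff.mp (hS.diag_nonneg (i := 1))
  have hT0 := Complex.nonneg_iff.mp (hT.diag_nonneg (i := 0))
  have hT1 := Complex.nonneg_iff.mp (hT.diag_nonneg (i := 1))
  have hcross : 2 * (S 0 1 * T 0 1).re ≤ (S 0 0).re * (T 1 1).re + (S 1 1).re * (T 0 0).re := by
    refine two_mul_le_add_of_sq_le_mul (by simpa using mul_nonneg hS0.1 hT1.1)
      (by simpa using mul_nonneg hS1.1 hT0.1) ?_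
    calc (S 0 1 * T 0 1).re ^ 2 ≤ Complex.normSq (S 0 1 * T 0 1) := by
          rw [sq]; exact Complex.re_sq_le_normSq _
      _ = Complex.normSq (S 0 1) * Complex.normSq (T 0 1) := Complex.normSq_mul _ _
      _ ≤ ((S 0 0).re * (S 1 1).re) * ((T 0 0).re * (T 1 1).re) :=
        mul_le_mul (hS.normSq_apply_le 0 1) (hT.normSq_apply_le 0 1) (Complex.normSq_nonneg _)
          (by simpa using mul_nonneg hS0.1 hS1.1)
      _ = _ := by ring
  simp only [Fin.sum_univ_two, trace_fin_two, hS10, hT10, Complex.add_re, Complex.mul_re,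
    Complex.conj_re, Complex.conj_im, ← hS0.2, ← hS1.2, ← hT0.2, ← hT1.2] at hcross ⊢
  linarith

end Matrix

lemma isDensityMatrix_smul_vecMulVec {d : Type*} [Fintype d] {v : d → ℂ} {c : ℝ} (hc : 0 ≤ c)
    (h : (c : ℂ) * (star v ⬝ᵥ v) = 1) : IsDensityMatrix ((c : ℂ) • vecMulVec v (star v)) :=
  ⟨(posSemidef_vecMulVec_self_star v).smul (Complex.zero_le_real.mpr hc), by
    rw [trace_smul, trace_vecMulVec, dotProduct_comm, smul_eq_mul, h]⟩

lemma isDensityMatrix_vecMulVec {d : Type*} [Fintype d] {v : d → ℂ} (hv : star v ⬝ᵥ v = 1) :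
    IsDensityMatrix (vecMulVec v (star v)) :=
  ⟨posSemidef_vecMulVec_self_star v, by rw [trace_vecMulVec, dotProduct_comm, hv]⟩

section Isometry

variable {m n : Type*} [Fintype m] [Fintype n] [DecidableEq m] {σ : Matrix m m ℂ}

lemma IsDensityMatrix.mul_mul_conjTranspose (hσ : IsDensityMatrix σ) {V : Matrix n m ℂ}
    (hV : Vᴴ * V = 1) : IsDensityMatrix (V * σ * Vᴴ) :=
  ⟨hσ.1.mul_mul_conjTranspose_same V, by
    rw [Matrix.mul_assoc, trace_mul_comm, Matrix.mul_assoc, hV, Matrix.mul_one, hσ.2]⟩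

lemma IsDensityMatrix.re_trace_conjTranspose_mul_mul_le_one [DecidableEq n]
    (hσ : IsDensityMatrix σ) {V : Matrix m n ℂ} (hV : Vᴴ * V = 1) :
    (Vᴴ * σ * V).trace.re ≤ 1 := by
  simpa [hσ.2] using (Complex.le_def.mp (trace_conjTranspose_mul_mul_le hV hσ.1)).1

end Isometry

section Separability

variable {dA dB : Type*} [Fintype dA] [Fintype dB]

lemma SeparableState.posSemidef {ρ : Matrix (dA × dB) (dA × dB) ℂ} (h : SeparableState ρ) :
    ρ.PosSemidef := by
  obtain ⟨n, p, σ, τ, hp, -, hσ, hτ, rfl⟩ := h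
  exact posSemidef_sum _ fun k _ =>
    ((hσ k).1.kronecker (hτ k).1).smul (Complex.zero_le_real.mpr (hp k))

lemma SeparableState.re_dotProduct_mulVec_le {ρ : Matrix (dA × dB) (dA × dB) ℂ}
    (h : SeparableState ρ) {v : dA × dB → ℂ} {b : ℝ}
    (hb : ∀ σ τ, IsDensityMatrix σ → IsDensityMatrix τ → (star v ⬝ᵥ (σ ⊗ₖ τ) *ᵥ v).re ≤ b) :
    (star v ⬝ᵥ ρ *ᵥ v).re ≤ b := by
  obtain ⟨n, p, σ, τ, hp, hp1, hσ, hτ, rfl⟩ := h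
  calc (star v ⬝ᵥ (∑ k, (p k : ℂ) • (σ k ⊗ₖ τ k)) *ᵥ v).re
      = ∑ k, p k * (star v ⬝ᵥ (σ k ⊗ₖ τ k) *ᵥ v).re := by
        simp [sum_mulVec, dotProduct_sum, smul_mulVec, Complex.re_sum]
    _ ≤ ∑ k, p k * b :=
        Finset.sum_le_sum fun k _ => mul_le_mul_of_nonneg_left (hb _ _ (hσ k) (hτ k)) (hp k)
    _ = b := by rw [← Finset.sum_mul, hp1, one_mul]

lemma SeparableState.kronecker_mul_mul_conjTranspose {mA mB : Type*} [Fintype mA] [Fintype mB]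
    [DecidableEq mA] [DecidableEq mB] {ρ : Matrix (mA × mB) (mA × mB) ℂ} (h : SeparableState ρ)
    {V : Matrix dA mA ℂ} {V' : Matrix dB mB ℂ} (hV : Vᴴ * V = 1) (hV' : V'ᴴ * V' = 1) :
    SeparableState ((V ⊗ₖ V') * ρ * (V ⊗ₖ V')ᴴ) := by
  obtain ⟨n, p, σ, τ, hp, hp1, hσ, hτ, rfl⟩ := h
  refine ⟨n, p, fun k => V * σ k * Vᴴ, fun k => V' * τ k * V'ᴴ, hp, hp1,
    fun k => (hσ k).mul_mul_conjTranspose hV, fun k => (hτ k).mul_mul_conjTranspose hV', ?_⟩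
  simp only [Matrix.mul_sum, Matrix.sum_mul, Matrix.mul_smul, Matrix.smul_mul,
    conjTranspose_kronecker, kronecker_mul_kronecker_mul_kronecker]

lemma one_le_mul_one_add_of_separableState_mix {v : dA × dB → ℂ} (hv : star v ⬝ᵥ v = 1) {b : ℝ}
    (hb : ∀ σ τ, IsDensityMatrix σ → IsDensityMatrix τ → (star v ⬝ᵥ (σ ⊗ₖ τ) *ᵥ v).re ≤ b)
    {t : ℝ} (ht : 0 ≤ t) {σ : Matrix (dA × dB) (dA × dB) ℂ} (hσ : SeparableState σ)
    (hmix : SeparableState (((1 + t : ℝ) : ℂ)⁻¹ • (vecMulVec v (star v) + (t : ℂ) • σ))) :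
    1 ≤ b * (1 + t) := by
  have hσv : 0 ≤ (star v ⬝ᵥ σ *ᵥ v).re := hσ.posSemidef.re_dotProduct_nonneg v
  have hρv : star v ⬝ᵥ vecMulVec v (star v) *ᵥ v = 1 := by
    rw [vecMulVec_mulVec, hv]; simpa using hv
  have hmixv := hmix.re_dotProduct_mulVec_le hb
  rw [smul_mulVec, add_mulVec, smul_mulVec] at hmixv
  simp only [dotProduct_smul, dotProduct_add, hρv, smul_eq_mul, ← Complex.ofReal_inv,
    Complex.re_ofReal_mul, Complex.add_re, Complex.one_re] at hmixv
  rw [inv_mul_le_iff₀ (by linarith)] at hmixv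
  nlinarith [mul_nonneg ht hσv]

end Separability

lemma ofReal_inv_sqrt_two_mul_self : ((√2 : ℝ) : ℂ)⁻¹ * ((√2 : ℝ) : ℂ)⁻¹ = 1 / 2 := by
  rw [← mul_inv, ← Complex.ofReal_mul, Real.mul_self_sqrt zero_le_two]; norm_num

def bell : Fin 2 × Fin 2 → ℂ := fun p => if p.1 = p.2 then ((√2 : ℝ) : ℂ)⁻¹ else 0

lemma star_bell_dotProduct_bell : star bell ⬝ᵥ bell = 1 := by
  simp [bell, dotProduct, Fintype.sum_prod_type, ofReal_inv_sqrt_two_mul_self]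

lemma vecMulVec_bell_apply (p q : Fin 2 × Fin 2) :
    vecMulVec bell (star bell) p q = if p.1 = p.2 ∧ q.1 = q.2 then 1 / 2 else 0 := by
  by_cases hp : p.1 = p.2 <;> by_cases hq : q.1 = q.2 <;>
    simp [bell, vecMulVec_apply, hp, hq, ofReal_inv_sqrt_two_mul_self]

lemma star_bell_dotProduct_kronecker_mulVec_bell (S T : Matrix (Fin 2) (Fin 2) ℂ) :
    star bell ⬝ᵥ (S ⊗ₖ T) *ᵥ bell = (∑ i, ∑ j, S i j * T i j) / 2 := by
  simp only [bell, dotProduct, mulVec, Fintype.sum_prod_type, Fin.sum_univ_two, Pi.star_apply,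
    kroneckerMap_apply]
  simp only [↓reduceIte, zero_ne_one, one_ne_zero, star_inv₀, RCLike.star_def, conj_ofReal,
    star_zero, mul_zero, zero_mul, add_zero, zero_add]
  linear_combination
    (S 0 0 * T 0 0 + S 0 1 * T 0 1 + S 1 0 * T 1 0 + S 1 1 * T 1 1) * ofReal_inv_sqrt_two_mul_self

lemma re_star_bell_dotProduct_kronecker_mulVec_bell_le {S T : Matrix (Fin 2) (Fin 2) ℂ}
    (hS : S.PosSemidef) (hT : T.PosSemidef) :
    (star bell ⬝ᵥ (S ⊗ₖ T) *ᵥ bell).re ≤ S.trace.re * T.trace.re / 2 := by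
  rw [star_bell_dotProduct_kronecker_mulVec_bell, Complex.div_ofNat_re]
  linarith [hS.re_sum_mul_le_fin_two hT]

def phaseState (ω : ℂ) : Matrix (Fin 2) (Fin 2) ℂ :=
  ((1 / 2 : ℝ) : ℂ) • vecMulVec ![1, ω] (star ![1, ω])

lemma isDensityMatrix_phaseState {ω : ℂ} (hω : ‖ω‖ = 1) : IsDensityMatrix (phaseState ω) := by
  refine isDensityMatrix_smul_vecMulVec (by norm_num) ?_
  simp only [dotProduct, Fin.sum_univ_two, Pi.star_apply, cons_val_zero, cons_val_one,
    RCLike.star_def, Complex.conj_mul', hω]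
  norm_num

def bellWitness : Matrix (Fin 2 × Fin 2) (Fin 2 × Fin 2) ℂ :=
  ∑ k : Fin 2, ((1 / 2 : ℝ) : ℂ) • (vecMulVec (Pi.single k 1) (star (Pi.single k 1)) ⊗ₖ
    vecMulVec (Pi.single (k + 1) 1) (star (Pi.single (k + 1) 1)))

def bellMixture : Matrix (Fin 2 × Fin 2) (Fin 2 × Fin 2) ℂ :=
  ∑ k : Fin 4, ((1 / 4 : ℝ) : ℂ) • (phaseState (I ^ (k : ℕ)) ⊗ₖ phaseState ((-I) ^ (k : ℕ)))

lemma separableState_bellWitness : SeparableState bellWitness :=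
  ⟨2, fun _ => 1 / 2, _, _, fun _ => by norm_num, by norm_num,
    fun _ => isDensityMatrix_vecMulVec (by simp), fun _ => isDensityMatrix_vecMulVec (by simp),
    rfl⟩

lemma separableState_bellMixture : SeparableState bellMixture :=
  ⟨4, fun _ => 1 / 4, _, _, fun _ => by norm_num, by norm_num,
    fun _ => isDensityMatrix_phaseState (by simp), fun _ => isDensityMatrix_phaseState (by simp),
    rfl⟩

lemma smul_vecMulVec_bell_add_bellWitness :
    (1 / 2 : ℂ) • (vecMulVec bell (star bell) + bellWitness) = bellMixture := by
  ext ⟨a, b⟩ ⟨c, d⟩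
  simp only [Matrix.smul_apply, Matrix.add_apply, vecMulVec_bell_apply]
  simp only [bellMixture, bellWitness, phaseState, Matrix.sum_apply, Matrix.smul_apply,
    Fin.sum_univ_four, Fin.sum_univ_two, kroneckerMap_apply, vecMulVec_apply, Pi.star_apply]
  fin_cases a <;> fin_cases b <;> fin_cases c <;> fin_cases d <;>
    simp [pow_succ, Complex.ext_iff] <;> norm_num

section LocalIsometry

variable {dA dB : Type*} [Fintype dA] [Fintype dB] [DecidableEq dA] [DecidableEq dB]
  {V : Matrix dA (Fin 2) ℂ} {V' : Matrix dB (Fin 2) ℂ}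

lemma re_dotProduct_kronecker_mulVec_bell_le_half (hV : Vᴴ * V = 1) (hV' : V'ᴴ * V' = 1)
    {σ : Matrix dA dA ℂ} {τ : Matrix dB dB ℂ} (hσ : IsDensityMatrix σ) (hτ : IsDensityMatrix τ) :
    (star ((V ⊗ₖ V') *ᵥ bell) ⬝ᵥ (σ ⊗ₖ τ) *ᵥ ((V ⊗ₖ V') *ᵥ bell)).re ≤ 1 / 2 := by
  rw [star_mulVec_dotProduct_mulVec, conjTranspose_kronecker,
    kronecker_mul_kronecker_mul_kronecker]
  have hS := hσ.1.conjTranspose_mul_mul_same V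
  have hT := hτ.1.conjTranspose_mul_mul_same V'
  have hT0 : 0 ≤ (V'ᴴ * τ * V').trace.re := by simpa using (Complex.le_def.mp hT.trace_nonneg).1
  have hS1 := hσ.re_trace_conjTranspose_mul_mul_le_one hV
  have hT1 := hτ.re_trace_conjTranspose_mul_mul_le_one hV'
  calc _ ≤ (Vᴴ * σ * V).trace.re * (V'ᴴ * τ * V').trace.re / 2 :=
        re_star_bell_dotProduct_kronecker_mulVec_bell_le hS hT
    _ ≤ 1 * 1 / 2 := by gcongr
    _ = 1 / 2 := by norm_num

theorem robustness_vecMulVec_kronecker_mulVec_bell (hV : Vᴴ * V = 1) (hV' : V'ᴴ * V' = 1) :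
    robustness (vecMulVec ((V ⊗ₖ V') *ᵥ bell) (star ((V ⊗ₖ V') *ᵥ bell))) = 1 := by
  have hW : (V ⊗ₖ V')ᴴ * (V ⊗ₖ V') = 1 := by
    rw [conjTranspose_kronecker, ← mul_kronecker_mul, hV, hV', one_kronecker_one]
  have hunit : star ((V ⊗ₖ V') *ᵥ bell) ⬝ᵥ (V ⊗ₖ V') *ᵥ bell = 1 := by
    simpa [hW, star_bell_dotProduct_bell] using star_mulVec_dotProduct_mulVec (V ⊗ₖ V') 1 bell
  have hmix : ((1 + 1 : ℝ) : ℂ)⁻¹ • (vecMulVec ((V ⊗ₖ V') *ᵥ bell) (star ((V ⊗ₖ V') *ᵥ bell)) +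
      ((1 : ℝ) : ℂ) • ((V ⊗ₖ V') * bellWitness * (V ⊗ₖ V')ᴴ)) =
      (V ⊗ₖ V') * bellMixture * (V ⊗ₖ V')ᴴ := by
    rw [← smul_vecMulVec_bell_add_bellWitness, vecMulVec_mulVec_star]
    simp only [Matrix.mul_smul, Matrix.smul_mul, Matrix.mul_add, Matrix.add_mul]
    norm_num
  refine IsLeast.csInf_eq ⟨⟨zero_le_one, _,
    separableState_bellWitness.kronecker_mul_mul_conjTranspose hV hV', ?_⟩, ?_⟩
  · rw [hmix]
    exact separableState_bellMixture.kronecker_mul_mul_conjTranspose hV hV'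
  · rintro t ⟨ht, σ, hσ, hσmix⟩
    have := one_le_mul_one_add_of_separableState_mix hunit
      (fun _ _ => re_dotProduct_kronecker_mulVec_bell_le_half hV hV') ht hσ hσmix
    linarith

end LocalIsometry

def copyIsometry : Matrix (Fin 2 × Fin 2) (Fin 2) ℂ :=
  of fun p i => if p.1 = i ∧ p.2 = i then 1 else 0

def bellIsometry : Matrix (Fin 2 × Fin 2) (Fin 2) ℂ :=
  of fun p i => if p.2 = p.1 + i then ((√2 : ℝ) : ℂ)⁻¹ else 0

lemma copyIsometry_conjTranspose_mul_self : copyIsometryᴴ * copyIsometry = 1 := by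
  ext i j
  fin_cases i <;> fin_cases j <;> simp [copyIsometry, mul_apply, Fintype.sum_prod_type]

lemma bellIsometry_conjTranspose_mul_self : bellIsometryᴴ * bellIsometry = 1 := by
  ext i j
  fin_cases i <;> fin_cases j <;>
    simp [bellIsometry, mul_apply, Fintype.sum_prod_type, ofReal_inv_sqrt_two_mul_self]

lemma choiVec_CNOT : choiVec (toPair !![1, 0, 0, 0; 0, 1, 0, 0; 0, 0, 0, 1; 0, 0, 1, 0]) =
    (copyIsometry ⊗ₖ bellIsometry) *ᵥ bell := by
  ext ⟨⟨a, b⟩, ⟨c, d⟩⟩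
  fin_cases a <;> fin_cases b <;> fin_cases c <;> fin_cases d <;>
    simp [choiVec, toPair, pairIdx, copyIsometry, bellIsometry, bell, mulVec, dotProduct,
      Fintype.sum_prod_type, ofReal_inv_sqrt_two_mul_self]

theorem robustness_choi_CNOT :
    let U := toPair !![1, 0, 0, 0; 0, 1, 0, 0; 0, 0, 0, 1; 0, 0, 1, 0]
    let Φ := choiVec U
    1 + 2 * robustness (vecMulVec Φ (star Φ)) = 3 ∧
      robustness (vecMulVec Φ (star Φ)) = 1 := by
  intro U Φ
  have h : robustness (vecMulVec Φ (star Φ)) = 1 := by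
    rw [show Φ = _ from choiVec_CNOT]
    exact robustness_vecMulVec_kronecker_mulVec_bell copyIsometry_conjTranspose_mul_self
      bellIsometry_conjTranspose_mul_self
  exact ⟨by rw [h]; norm_num, h⟩
end
end
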